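/- Let Ξ be the unique nonnegative solution, started at 0, of Ξ(t) = ∫₀^t √(1 − e^{−Ξ(s)}) dβ(s) + (1/2) ∫₀^t e^{−Ξ(s)} ds, with β a standard Brownian motion. Then for all t > 100, ℙ(sup_{0 ≤ s ≤ t} Ξ(s) < 1) ≤ 2 exp(−t/50). -/

import Mathlib

open MeasureTheory ProbabilityTheory Filter Set

noncomputable section

namespace ModDev

variable {Ω : Type*}

/-- `B` is a standard one-dimensional Brownian motion started at `0`
(only times `t ≥ 0` are relevant): continuous paths, `B 0 = 0`, Gaussian
increments and independent increments. -/
def IsBrownianMotion [MeasurableSpace Ω] (μ : Measure Ω) (B : Ω → ℝ → ℝ) : Prop :=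
  (∀ t : ℝ, Measurable fun ω => B ω t) ∧
  (∀ᵐ ω ∂μ, Continuous (B ω) ∧ B ω 0 = 0) ∧
  (∀ s t : ℝ, 0 ≤ s → s ≤ t →
    μ.map (fun ω => B ω t - B ω s) = gaussianReal 0 (Real.toNNReal (t - s))) ∧
  (∀ n : ℕ, ∀ u : ℕ → ℝ, (∀ i, 0 ≤ u i) → Monotone u →
    iIndepFun
      (fun i : Fin n => fun ω => B ω (u (i + 1)) - B ω (u i)) μ)

/-- `W` is a two-sided standard Brownian motion indexed by `ℝ`, with `W 0 = 0`. -/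
def IsTwoSidedBM [MeasurableSpace Ω] (μ : Measure Ω) (W : Ω → ℝ → ℝ) : Prop :=
  (∀ t : ℝ, Measurable fun ω => W ω t) ∧
  (∀ᵐ ω ∂μ, Continuous (W ω) ∧ W ω 0 = 0) ∧
  (∀ s t : ℝ, s ≤ t →
    μ.map (fun ω => W ω t - W ω s) = gaussianReal 0 (Real.toNNReal (t - s))) ∧
  (∀ n : ℕ, ∀ u : ℕ → ℝ, Monotone u →
    iIndepFun
      (fun i : Fin n => fun ω => W ω (u (i + 1)) - W ω (u i)) μ)

/-- `L` is the (jointly continuous, nonnegative) family of local times of `B`,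
characterized by the occupation density formula
`∫₀ᵗ f (B s) ds = ∫ f x · L t x dx` for nonnegative Borel `f`. -/
def IsLocalTime [MeasurableSpace Ω] (μ : Measure Ω) (B : Ω → ℝ → ℝ)
    (L : Ω → ℝ → ℝ → ℝ) : Prop :=
  (∀ t x : ℝ, Measurable fun ω => L ω t x) ∧
  (∀ᵐ ω ∂μ, Continuous (Function.uncurry (L ω)) ∧ (∀ t x, 0 ≤ L ω t x) ∧
    ∀ t : ℝ, 0 ≤ t → ∀ f : ℝ → ENNReal, Measurable f →
      (∫⁻ s in Set.Ioc (0:ℝ) t, f (B ω s)) = ∫⁻ x, f x * ENNReal.ofReal (L ω t x))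

/-- first hitting time of the level `y` by the path `Y` -/
def hitTime (Y : ℝ → ℝ) (y : ℝ) : ℝ := sInf {t : ℝ | 0 ≤ t ∧ Y t = y}

/-- `σ(y) = inf {t > 0 : Y t > y}` -/
def hitAbove (Y : ℝ → ℝ) (y : ℝ) : ℝ := sInf {t : ℝ | 0 < t ∧ y < Y t}

/-- inverse local time at level `0`: `τ(r) = inf {t > 0 : L(t,0) > r}` -/
def invLocalTime (L : ℝ → ℝ → ℝ) (r : ℝ) : ℝ := sInf {t : ℝ | 0 < t ∧ r < L t 0}

/-- `Z` solves the martingale problem for the generator `(a/2) f'' + b f'`,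
for test functions supported in `s`. -/
def SolvesMPOn [m : MeasurableSpace Ω] (μ : Measure Ω) (a b : ℝ → ℝ) (s : Set ℝ)
    (Z : Ω → ℝ → ℝ) : Prop :=
  (∀ t : ℝ, Measurable fun ω => Z ω t) ∧
  (∀ᵐ ω ∂μ, Continuous (Z ω)) ∧
  ∃ ℱ : Filtration NNReal m,
    Adapted ℱ (fun (t : NNReal) ω => Z ω (t : ℝ)) ∧
    ∀ f : ℝ → ℝ, ContDiff ℝ 2 f → HasCompactSupport f → tsupport f ⊆ s →
      Martingale (fun (t : NNReal) ω => f (Z ω (t : ℝ)) -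
        ∫ u in (0:ℝ)..(t : ℝ),
          (a (Z ω u) / 2 * deriv (deriv f) (Z ω u) + b (Z ω u) * deriv f (Z ω u))) ℱ μ

/-- martingale problem with arbitrary compactly supported `C²` test functions -/
def SolvesMP [MeasurableSpace Ω] (μ : Measure Ω) (a b : ℝ → ℝ) (Z : Ω → ℝ → ℝ) : Prop :=
  SolvesMPOn μ a b Set.univ Z

/-- Bessel process of dimension `δ` started at `x₀ ≥ 0` (absorbed at `0`):
nonnegative continuous solution of the martingale problem for
`(1/2) f'' + ((δ-1)/(2x)) f'` for test functions supported in `(0,∞)`. -/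
def IsBesselProcess [MeasurableSpace Ω] (μ : Measure Ω) (δ x₀ : ℝ)
    (R : Ω → ℝ → ℝ) : Prop :=
  SolvesMPOn μ (fun _ => 1) (fun z => (δ - 1) / (2 * z)) (Set.Ioi 0) R ∧
  ∀ᵐ ω ∂μ, R ω 0 = x₀ ∧ (∀ t, 0 ≤ R ω t) ∧
    ∀ t s : ℝ, 0 ≤ t → t ≤ s → R ω t = 0 → R ω s = 0

/-- squared Bessel process of dimension `δ` started at `x₀`: nonnegative continuous
solution of the martingale problem for the generator `2x f'' + δ f'`. -/
def IsBESQ [MeasurableSpace Ω] (μ : Measure Ω) (δ x₀ : ℝ) (U : Ω → ℝ → ℝ) : Prop :=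
  SolvesMP μ (fun z => 4 * z) (fun _ => δ) U ∧
  ∀ᵐ ω ∂μ, U ω 0 = x₀ ∧ ∀ t, 0 ≤ U ω t

/-- `X` is the diffusion with potential `V` started from `x₀`, conditionally on the
environment `V` a diffusion with generator `(1/2) e^{V(x)} (d/dx)(e^{-V(x)} d/dx)`;
it is realized through the classical (Brox) time-change representation
`X(t) = A⁻¹(B(T⁻¹(t)))`, where `A(y) = ∫_{x₀}^y e^{V(z)} dz`,
`T(u) = ∫₀^u e^{-2V(A⁻¹(B(s)))} ds` and `B` is a Brownian motion independent of `V`. -/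
def IsDiffusionWithPotentialFrom [MeasurableSpace Ω] (μ : Measure Ω)
    (V : Ω → ℝ → ℝ) (x₀ : ℝ) (X : Ω → ℝ → ℝ) : Prop :=
  (∀ t : ℝ, Measurable fun ω => X ω t) ∧
  ∃ B Ainv Tinv : Ω → ℝ → ℝ,
    IsBrownianMotion μ B ∧
    IndepFun (fun ω => V ω) (fun ω => B ω) μ ∧
    ∀ᵐ ω ∂μ,
      (∀ y : ℝ, Ainv ω (∫ z in x₀..y, Real.exp (V ω z)) = y) ∧
      (∀ t : ℝ, 0 ≤ t → 0 ≤ Tinv ω t ∧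
        (∫ s in (0:ℝ)..(Tinv ω t), Real.exp (-2 * V ω (Ainv ω (B ω s)))) = t) ∧
      (∀ t : ℝ, 0 ≤ t → X ω t = Ainv ω (B ω (Tinv ω t)))

/-- the diffusion with potential `V` started from `0` -/
def IsDiffusionWithPotential [MeasurableSpace Ω] (μ : Measure Ω)
    (V : Ω → ℝ → ℝ) (X : Ω → ℝ → ℝ) : Prop :=
  IsDiffusionWithPotentialFrom μ V 0 X

/-- the σ-algebra generated by the environment (potential) `V`; conditioning on it
gives the quenched probability -/
def envSigma [MeasurableSpace Ω] (V : Ω → ℝ → ℝ) : MeasurableSpace Ω :=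
  MeasurableSpace.comap (fun ω => V ω) inferInstance

/-- `W^#(a,b) = sup_{0 ≤ s ≤ t ≤ 1} (W(a + t(b-a)) - W(a + s(b-a)))` -/
def Wsharp (w : ℝ → ℝ) (a b : ℝ) : ℝ :=
  sSup ((fun p : ℝ × ℝ => w (a + p.2 * (b - a)) - w (a + p.1 * (b - a))) ''
    {p : ℝ × ℝ | 0 ≤ p.1 ∧ p.1 ≤ p.2 ∧ p.2 ≤ 1})

/-- modified Bessel function of the second kind (Macdonald function) of index `ν` -/
def besselK (ν x : ℝ) : ℝ :=
  ∫ t in Set.Ioi (0:ℝ), Real.exp (-x * Real.cosh t) * Real.cosh (ν * t)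

/-- modified Bessel function of the first kind of index `1` -/
def besselI1 (x : ℝ) : ℝ :=
  ∑' n : ℕ, (x / 2) ^ (2 * n + 1) / ((n.factorial : ℝ) * ((n + 1).factorial : ℝ))

end ModDev

/-!
The test function `f` is a compactly supported cubic spline, nonincreasing on `[0, ∞)`, with
`f ≥ 1` on `[0, 1]` and whose image `Lf` under the generator of `Ξ` satisfies `Lf ≤ 1` on
`[0, ∞)` and `Lf ≤ -1` on `[0, 1]`. Since `f(Ξ t) - ∫₀ᵗ Lf(Ξ u) du` is a martingale, integrating
it over the event that `Ξ` has stayed in `[0, 1]` up to time `13 n` shows that this event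
shrinks at least by the factor `ρ = 15187/20736 < e^{-13/50}` from `n` to `n + 1`.
Hence `ℙ(sup_{[0,t]} Ξ < 1) ≤ ρ^⌊t/13⌋ ≤ e^{13/50} e^{-t/50}`.
-/

open Topology Asymptotics
open scoped NNReal

namespace ModDev

lemma hasDerivAt_posPart_pow {n : ℕ} (hn : 2 ≤ n) (x : ℝ) :
    HasDerivAt (fun y : ℝ => y⁺ ^ n) (n * x⁺ ^ (n - 1)) x := by
  rcases lt_trichotomy x 0 with hx | rfl | hx
  · have hzero : (fun y : ℝ => y⁺ ^ n) =ᶠ[𝓝 x] fun _ => 0 := by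
      filter_upwards [Iio_mem_nhds hx] with y (hy : y < 0)
      simp [posPart_of_nonpos hy.le, zero_pow (by omega : n ≠ 0)]
    simpa [posPart_of_nonpos hx.le, zero_pow (by omega : n - 1 ≠ 0)] using
      (hasDerivAt_const x (0 : ℝ)).congr_of_eventuallyEq hzero
  · have hbound : (fun y : ℝ => y⁺ ^ n) =O[𝓝 0] fun y => y ^ n :=
      isBigO_of_le _ fun y => by
        simpa only [norm_pow] using
          pow_le_pow_left₀ (norm_nonneg _) (by rcases le_total y 0 with h | h <;> simp [h]) n
    rw [hasDerivAt_iff_isLittleO_nhds_zero]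
    simpa [zero_pow (by omega : n ≠ 0), zero_pow (by omega : n - 1 ≠ 0)] using
      hbound.trans_isLittleO (isLittleO_pow_id (by omega))
  · have hpow : (fun y : ℝ => y⁺ ^ n) =ᶠ[𝓝 x] fun y => y ^ n := by
      filter_upwards [Ioi_mem_nhds hx] with y (hy : 0 < y)
      rw [posPart_of_nonneg hy.le]
    simpa [posPart_of_nonneg hx.le] using (hasDerivAt_pow n x).congr_of_eventuallyEq hpow

def truncPowSum {ι : Type*} [Fintype ι] (c k : ι → ℝ) (n : ℕ) (z : ℝ) : ℝ :=
  ∑ i, c i * (z - k i)⁺ ^ n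

section TruncPowSum

variable {ι : Type*} [Fintype ι] (c k : ι → ℝ)

lemma hasDerivAt_truncPowSum (n : ℕ) (z : ℝ) :
    HasDerivAt (truncPowSum c k (n + 2)) ((n + 2) * truncPowSum c k (n + 1) z) z := by
  unfold truncPowSum
  rw [Finset.mul_sum]
  refine HasDerivAt.fun_sum fun i _ => ?_
  refine (((hasDerivAt_posPart_pow (n := n + 2) (by omega) (z - k i)).comp_sub_const z
    (k i)).const_mul (c i)).congr_deriv ?_
  push_cast [Nat.add_sub_cancel]
  ring

lemma deriv_truncPowSum (n : ℕ) :
    deriv (truncPowSum c k (n + 2)) = fun z => (n + 2) * truncPowSum c k (n + 1) z :=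
  funext fun z => (hasDerivAt_truncPowSum c k n z).deriv

lemma continuous_truncPowSum (n : ℕ) : Continuous (truncPowSum c k n) := by
  unfold truncPowSum
  fun_prop

lemma contDiff_truncPowSum {m n : ℕ} (h : m < n) : ContDiff ℝ m (truncPowSum c k n) := by
  induction m generalizing n with
  | zero => exact contDiff_zero.2 (continuous_truncPowSum c k n)
  | succ m ih =>
    obtain ⟨n, rfl⟩ : ∃ n', n = n' + 2 := ⟨n - 2, by omega⟩
    rw [Nat.cast_succ, contDiff_succ_iff_deriv, deriv_truncPowSum]
    exact ⟨fun z => (hasDerivAt_truncPowSum c k n z).differentiableAt, by simp,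
      contDiff_const.mul (ih (by omega))⟩

end TruncPowSum

def xiGenerator (f : ℝ → ℝ) (z : ℝ) : ℝ :=
  (1 - Real.exp (-z)) / 2 * deriv (deriv f) z + Real.exp (-z) / 2 * deriv f z

def xiTestKnots : Fin 9 → ℝ := ![-4, -3, -2, -1, 0, 1, 3/2, 41/16, 57/16]

/- On `[0, 1]` these coefficients give `f' = -2 - z - z²/4` and `f'' = -1 - z/2`, which makes
`xiGenerator f ≤ -1` there, and on `[1, 57/16]` `f` decreases to `0`. The moments `∑ cᵢ kᵢʲ`,
`j ≤ 3`, vanish, so `f = 0` beyond the last knot; the knots left of `0` make room for this. -/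
def xiTestCoeffs : Fin 9 → ℝ :=
  ![2161/3072, -2161/1536, -1/4, 891/512, -891/1024, 5/4, -7/6, -1/3, 1/3]

def xiTest : ℝ → ℝ := truncPowSum xiTestCoeffs xiTestKnots 3

lemma deriv_xiTest : deriv xiTest = fun z => 3 * truncPowSum xiTestCoeffs xiTestKnots 2 z := by
  rw [xiTest, deriv_truncPowSum]
  norm_num

lemma deriv_deriv_xiTest :
    deriv (deriv xiTest) = fun z => 6 * truncPowSum xiTestCoeffs xiTestKnots 1 z := by
  rw [deriv_xiTest]
  ext z
  rw [deriv_const_mul _ (hasDerivAt_truncPowSum _ _ 0 z).differentiableAt,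
    (hasDerivAt_truncPowSum _ _ 0 z).deriv]
  norm_num
  ring

lemma contDiff_xiTest : ContDiff ℝ 2 xiTest :=
  contDiff_truncPowSum _ _ (m := 2) (by norm_num)

lemma xiTest_eq_zero_of_le {z : ℝ} (hz : z ≤ -4) : xiTest z = 0 := by
  simp only [xiTest, truncPowSum, Fin.sum_univ_succ, Fin.sum_univ_zero, xiTestKnots, xiTestCoeffs,
    Matrix.cons_val_zero, Matrix.cons_val_succ]
  simp (disch := grind) only [posPart_of_nonpos]
  ring

lemma xiTest_eq_zero_of_ge {z : ℝ} (hz : 57/16 ≤ z) : xiTest z = 0 := by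
  simp only [xiTest, truncPowSum, Fin.sum_univ_succ, Fin.sum_univ_zero, xiTestKnots, xiTestCoeffs,
    Matrix.cons_val_zero, Matrix.cons_val_succ]
  simp (disch := grind) only [posPart_of_nonneg]
  ring

lemma hasCompactSupport_xiTest : HasCompactSupport xiTest := by
  refine HasCompactSupport.intro (isCompact_Icc (a := -4) (b := 57/16)) fun z hz => ?_
  rcases le_or_gt z (-4) with h | h
  · exact xiTest_eq_zero_of_le h
  · simp only [mem_Icc, not_and, not_le] at hz
    exact xiTest_eq_zero_of_ge (hz h.le).le

lemma deriv_xiTest_nonpos {z : ℝ} (hz : 0 ≤ z) : deriv xiTest z ≤ 0 := by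
  have hpieces : z ≤ 1 ∨ 1 ≤ z ∧ z ≤ 3/2 ∨ 3/2 ≤ z ∧ z ≤ 41/16 ∨ 41/16 ≤ z ∧ z ≤ 57/16 ∨
      57/16 ≤ z := by grind
  simp only [deriv_xiTest, truncPowSum, Fin.sum_univ_succ, Fin.sum_univ_zero, xiTestKnots,
    xiTestCoeffs, Matrix.cons_val_zero, Matrix.cons_val_succ]
  rcases hpieces with h | ⟨h, h'⟩ | ⟨h, h'⟩ | ⟨h, h'⟩ | h <;>
    simp (disch := grind) only [posPart_of_nonneg, posPart_of_nonpos] <;> nlinarith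

lemma deriv_deriv_xiTest_le {z : ℝ} (hz : 0 ≤ z) : deriv (deriv xiTest) z ≤ 2 := by
  have hpieces : z ≤ 1 ∨ 1 ≤ z ∧ z ≤ 3/2 ∨ 3/2 ≤ z ∧ z ≤ 41/16 ∨ 41/16 ≤ z ∧ z ≤ 57/16 ∨
      57/16 ≤ z := by grind
  simp only [deriv_deriv_xiTest, truncPowSum, Fin.sum_univ_succ, Fin.sum_univ_zero, xiTestKnots,
    xiTestCoeffs, Matrix.cons_val_zero, Matrix.cons_val_succ]
  rcases hpieces with h | ⟨h, h'⟩ | ⟨h, h'⟩ | ⟨h, h'⟩ | h <;>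
    simp (disch := grind) only [posPart_of_nonneg, posPart_of_nonpos] <;> linarith

lemma deriv_xiTest_of_mem_Icc {z : ℝ} (hz : z ∈ Icc 0 1) :
    deriv xiTest z = -2 - z - z ^ 2 / 4 := by
  obtain ⟨h, h'⟩ := hz
  simp only [deriv_xiTest, truncPowSum, Fin.sum_univ_succ, Fin.sum_univ_zero, xiTestKnots,
    xiTestCoeffs, Matrix.cons_val_zero, Matrix.cons_val_succ]
  simp (disch := grind) only [posPart_of_nonneg, posPart_of_nonpos]
  ring

lemma deriv_deriv_xiTest_of_mem_Icc {z : ℝ} (hz : z ∈ Icc 0 1) :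
    deriv (deriv xiTest) z = -1 - z / 2 := by
  obtain ⟨h, h'⟩ := hz
  simp only [deriv_deriv_xiTest, truncPowSum, Fin.sum_univ_succ, Fin.sum_univ_zero, xiTestKnots,
    xiTestCoeffs, Matrix.cons_val_zero, Matrix.cons_val_succ]
  simp (disch := grind) only [posPart_of_nonneg, posPart_of_nonpos]
  ring

lemma xiTest_zero : xiTest 0 = 5203/768 := by
  norm_num [xiTest, truncPowSum, Fin.sum_univ_succ, xiTestKnots, xiTestCoeffs]

lemma xiTest_one : xiTest 1 = 1073/256 := by
  norm_num [xiTest, truncPowSum, Fin.sum_univ_succ, xiTestKnots, xiTestCoeffs]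

lemma xiTest_antitoneOn : AntitoneOn xiTest (Ici 0) :=
  antitoneOn_of_deriv_nonpos (convex_Ici 0) contDiff_xiTest.continuous.continuousOn
    (contDiff_xiTest.differentiable (by norm_num)).differentiableOn
    fun z hz => deriv_xiTest_nonpos (interior_subset hz)

lemma xiTest_nonneg {z : ℝ} (hz : 0 ≤ z) : 0 ≤ xiTest z := by
  rcases le_total z (57/16) with h | h
  · simpa [xiTest_eq_zero_of_ge le_rfl] using
      xiTest_antitoneOn hz (show (0 : ℝ) ≤ 57/16 by norm_num) h
  · exact (xiTest_eq_zero_of_ge h).ge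

lemma xiTest_le {z : ℝ} (hz : 0 ≤ z) : xiTest z ≤ 5203/768 :=
  xiTest_zero ▸ xiTest_antitoneOn (mem_Ici.2 le_rfl) hz hz

lemma one_le_xiTest {z : ℝ} (hz : z ∈ Icc 0 1) : 1 ≤ xiTest z := by
  have := xiTest_antitoneOn hz.1 (mem_Ici.2 zero_le_one) hz.2
  rw [xiTest_one] at this
  linarith

lemma xiGenerator_xiTest_le_one {z : ℝ} (hz : 0 ≤ z) : xiGenerator xiTest z ≤ 1 := by
  have hw : 0 < Real.exp (-z) := Real.exp_pos _
  have hw1 : Real.exp (-z) ≤ 1 := Real.exp_le_one_iff.2 (by linarith)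
  have h1 := mul_le_mul_of_nonneg_left (deriv_deriv_xiTest_le hz)
    (by linarith : 0 ≤ (1 - Real.exp (-z)) / 2)
  have h2 := mul_nonpos_of_nonneg_of_nonpos (by positivity : 0 ≤ Real.exp (-z) / 2)
    (deriv_xiTest_nonpos hz)
  unfold xiGenerator
  linarith

lemma exp_mul_one_sub_half_le {z : ℝ} (hz : z ∈ Icc 0 1) :
    Real.exp z * (1 - z / 2) ≤ 1 + z / 2 + z ^ 2 / 4 := by
  obtain ⟨h0, h1⟩ := hz
  have hexp := Real.exp_bound' h0 h1 (n := 3) (by norm_num)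
  norm_num [Finset.sum_range_succ, Nat.factorial] at hexp
  nlinarith [mul_le_mul_of_nonneg_right hexp (by linarith : 0 ≤ 1 - z / 2), pow_nonneg h0 3,
    pow_nonneg h0 4]

lemma xiGenerator_xiTest_le_neg_one {z : ℝ} (hz : z ∈ Icc 0 1) :
    xiGenerator xiTest z ≤ -1 := by
  have hw : 0 < Real.exp (-z) := Real.exp_pos _
  have hkey := mul_le_mul_of_nonneg_left (exp_mul_one_sub_half_le hz) hw.le
  rw [← mul_assoc, ← Real.exp_add, neg_add_cancel, Real.exp_zero, one_mul] at hkey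
  rw [xiGenerator, deriv_deriv_xiTest_of_mem_Icc hz, deriv_xiTest_of_mem_Icc hz]
  nlinarith

section MartingaleProblem

variable {Ω : Type*} {m : MeasurableSpace Ω} {μ : Measure Ω}
  {ℱ : Filtration ℝ≥0 m} {X : Ω → ℝ → ℝ} {f g : ℝ → ℝ}

theorem integrable_intervalIntegral_of_martingale
    (hM : Martingale (fun (t : ℝ≥0) ω => f (X ω t) - ∫ u in (0 : ℝ)..t, g (X ω u)) ℱ μ)
    (hf : ∀ t : ℝ≥0, Integrable (fun ω => f (X ω t)) μ)
    (hgX : ∀ᵐ ω ∂μ, Continuous fun u => g (X ω u)) (s t : ℝ≥0) :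
    Integrable (fun ω => ∫ u in (s : ℝ)..t, g (X ω u)) μ := by
  refine (((hf t).sub (hM.integrable t)).sub ((hf s).sub (hM.integrable s))).congr ?_
  filter_upwards [hgX] with ω hω
  simp only [Pi.sub_apply, sub_sub_cancel]
  exact intervalIntegral.integral_interval_sub_left (hω.intervalIntegrable _ _)
    (hω.intervalIntegrable _ _)

theorem setIntegral_sub_eq_of_martingale [IsFiniteMeasure μ]
    (hM : Martingale (fun (t : ℝ≥0) ω => f (X ω t) - ∫ u in (0 : ℝ)..t, g (X ω u)) ℱ μ)
    (hf : ∀ t : ℝ≥0, Integrable (fun ω => f (X ω t)) μ)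
    (hgX : ∀ᵐ ω ∂μ, Continuous fun u => g (X ω u)) {s t : ℝ≥0} (hst : s ≤ t) {E : Set Ω}
    (hE : MeasurableSet[ℱ s] E) :
    ∫ ω in E, f (X ω t) ∂μ - ∫ ω in E, f (X ω s) ∂μ =
      ∫ ω in E, (∫ u in (s : ℝ)..t, g (X ω u)) ∂μ := by
  set F : ℝ≥0 → Ω → ℝ := fun r ω => f (X ω r)
  set M : ℝ≥0 → Ω → ℝ := fun r ω => f (X ω r) - ∫ u in (0 : ℝ)..r, g (X ω u)
  have hJ : (fun ω => ∫ u in (s : ℝ)..t, g (X ω u)) =ᵐ[μ.restrict E]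
      (F t - F s) - (M t - M s) := by
    filter_upwards [ae_restrict_of_ae hgX] with ω hω
    simp only [F, M, Pi.sub_apply]
    rw [← intervalIntegral.integral_interval_sub_left (hω.intervalIntegrable _ _)
      (hω.intervalIntegrable _ _)]
    ring
  have hF : ∀ r, Integrable (F r) μ := hf
  rw [integral_congr_ae hJ, integral_sub' ((hF t).sub (hF s)).integrableOn
    ((hM.integrable t).sub (hM.integrable s)).integrableOn,
    integral_sub' (hF t).integrableOn (hF s).integrableOn,
    integral_sub' (hM.integrable t).integrableOn (hM.integrable s).integrableOn,
    hM.setIntegral_eq hst hE, sub_self, sub_zero]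

lemma setIntegral_le_mul_measureReal {φ : Ω → ℝ} {E : Set Ω} {c : ℝ} (hE : MeasurableSet E)
    (hEfin : μ E ≠ ⊤) (hφ : IntegrableOn φ E μ) (h : ∀ᵐ ω ∂μ, ω ∈ E → φ ω ≤ c) :
    ∫ ω in E, φ ω ∂μ ≤ c * μ.real E := by
  simpa [mul_comm] using setIntegral_mono_on_ae hφ (integrableOn_const hEfin) hE h

lemma mul_measureReal_le_setIntegral {φ : Ω → ℝ} {E : Set Ω} {c : ℝ} (hE : MeasurableSet E)
    (hEfin : μ E ≠ ⊤) (hφ : IntegrableOn φ E μ) (h : ∀ᵐ ω ∂μ, ω ∈ E → c ≤ φ ω) :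
    c * μ.real E ≤ ∫ ω in E, φ ω ∂μ := by
  simpa [mul_comm] using setIntegral_mono_on_ae (integrableOn_const hEfin) hφ hE h

/-- Dynkin's formula for `f` on `E`: on `E'` we have `f (X t) ≥ 1` and the compensator grows by at
most `-B (t - s)`, elsewhere on `E` by at most `A (t - s)`. -/
theorem measureReal_confined_le [IsFiniteMeasure μ]
    (hM : Martingale (fun (t : ℝ≥0) ω => f (X ω t) - ∫ u in (0 : ℝ)..t, g (X ω u)) ℱ μ)
    (hf : ∀ t : ℝ≥0, Integrable (fun ω => f (X ω t)) μ) (hg : Continuous g)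
    {S K : Set ℝ} {C A B : ℝ} (hf0 : ∀ z ∈ S, 0 ≤ f z) (hfC : ∀ z ∈ S, f z ≤ C)
    (hfK : ∀ z ∈ K, 1 ≤ f z) (hgA : ∀ z ∈ S, g z ≤ A) (hgB : ∀ z ∈ K, g z ≤ -B)
    {s t : ℝ≥0} (hst : s ≤ t)
    (hX : ∀ᵐ ω ∂μ, Continuous (X ω) ∧ ∀ u ∈ Icc (s : ℝ) t, X ω u ∈ S)
    {E E' : Set Ω} (hE : MeasurableSet[ℱ s] E) (hE' : MeasurableSet E') (hE'E : E' ⊆ E)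
    (hE'K : ∀ᵐ ω ∂μ, ω ∈ E' → ∀ u ∈ Icc (s : ℝ) t, X ω u ∈ K) :
    (1 + (t - s) * (A + B)) * μ.real E' ≤ (C + (t - s) * A) * μ.real E := by
  have hst' : (s : ℝ) ≤ t := hst
  have hEm : MeasurableSet E := ℱ.le s E hE
  have hgX : ∀ᵐ ω ∂μ, Continuous fun u => g (X ω u) := hX.mono fun ω hω => hg.comp hω.1
  have hJ := integrable_intervalIntegral_of_martingale hM hf hgX s t
  have hJle : ∀ (ω : Ω) (c : ℝ), Continuous (X ω) → (∀ u ∈ Icc (s : ℝ) t, g (X ω u) ≤ c) →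
      ∫ u in (s : ℝ)..t, g (X ω u) ≤ c * (t - s) := by
    intro ω c hXω hc
    simpa [mul_comm] using intervalIntegral.integral_mono_on (μ := volume) hst'
      ((hg.comp hXω).intervalIntegrable _ _) intervalIntegrable_const hc
  have hlow : μ.real E' ≤ ∫ ω in E, f (X ω t) ∂μ := by
    calc μ.real E' = 1 * μ.real E' := (one_mul _).symm
      _ ≤ ∫ ω in E', f (X ω t) ∂μ :=
        mul_measureReal_le_setIntegral hE' (measure_ne_top μ _) (hf t).integrableOn
          (hE'K.mono fun ω h hω => hfK _ (h hω t ⟨hst', le_rfl⟩))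
      _ ≤ ∫ ω in E, f (X ω t) ∂μ :=
        setIntegral_mono_set (hf t).integrableOn
          (ae_restrict_of_ae (hX.mono fun ω h => hf0 _ (h.2 t ⟨hst', le_rfl⟩)))
          hE'E.eventuallyLE
  have hstart : ∫ ω in E, f (X ω s) ∂μ ≤ C * μ.real E :=
    setIntegral_le_mul_measureReal hEm (measure_ne_top μ _) (hf s).integrableOn
      (hX.mono fun ω h _ => hfC _ (h.2 s ⟨le_rfl, hst'⟩))
  have hinc : ∫ ω in E, (∫ u in (s : ℝ)..t, g (X ω u)) ∂μ ≤
      -B * (t - s) * μ.real E' + A * (t - s) * μ.real (E \ E') := by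
    rw [← union_sdiff_cancel hE'E, setIntegral_union disjoint_sdiff_right (hEm.diff hE')
      hJ.integrableOn hJ.integrableOn, union_sdiff_cancel hE'E]
    refine add_le_add (setIntegral_le_mul_measureReal hE' (measure_ne_top μ _) hJ.integrableOn ?_)
      (setIntegral_le_mul_measureReal (hEm.diff hE') (measure_ne_top μ _) hJ.integrableOn ?_)
    · filter_upwards [hX, hE'K] with ω hω hK hmem
      exact hJle ω _ hω.1 fun u hu => hgB _ (hK hmem u hu)
    · filter_upwards [hX] with ω hω _
      exact hJle ω _ hω.1 fun u hu => hgA _ (hω.2 u hu)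
  have hdynkin := setIntegral_sub_eq_of_martingale hM hf hgX hst hE
  rw [measureReal_sdiff hE'E hE'] at hinc
  nlinarith

end MartingaleProblem

section Confinement

variable {Ω : Type*} {m : MeasurableSpace Ω} {X : Ω → ℝ → ℝ} {K : Set ℝ}

/-- Only rational times, so that this is a countable intersection of events of `ℱ T`. -/
def confinedAtRationals (X : Ω → ℝ → ℝ) (K : Set ℝ) (T : ℝ) : Set Ω :=
  {ω | ∀ q : ℚ, (q : ℝ) ∈ Icc 0 T → X ω q ∈ K}

lemma measurableSet_confinedAtRationals {ℱ : Filtration ℝ≥0 m}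
    (hX : Adapted ℱ fun (t : ℝ≥0) ω => X ω t) (hK : MeasurableSet K) {T : ℝ} {t : ℝ≥0}
    (hT : T ≤ t) : MeasurableSet[ℱ t] (confinedAtRationals X K T) := by
  have hrw : confinedAtRationals X K T =
      ⋂ (q : ℚ) (_ : (q : ℝ) ∈ Icc 0 T), (fun ω => X ω q) ⁻¹' K := by
    ext ω
    simp [confinedAtRationals]
  rw [hrw]
  refine MeasurableSet.iInter fun q => MeasurableSet.iInter fun hq => ?_
  have hqt : (q : ℝ).toNNReal ≤ t := Real.toNNReal_le_iff_le_coe.2 (hq.2.trans hT)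
  have hmeas := hX (q : ℝ).toNNReal
  simp only [Real.coe_toNNReal _ hq.1] at hmeas
  exact ℱ.mono hqt _ (hmeas hK)

lemma confinedAtRationals_anti : Antitone (confinedAtRationals X K) :=
  fun _ _ hTT' _ hω q hq => hω q ⟨hq.1, hq.2.trans hTT'⟩

lemma mem_of_mem_confinedAtRationals {ω : Ω} {T : ℝ} (hω : ω ∈ confinedAtRationals X K T)
    (hXω : Continuous (X ω)) (hK : IsClosed K) (hT : 0 < T) {u : ℝ} (hu : u ∈ Icc 0 T) :
    X ω u ∈ K := by
  have hrat : Ioo 0 T ∩ range ((↑) : ℚ → ℝ) ⊆ X ω ⁻¹' K := by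
    rintro _ ⟨hq, q, rfl⟩
    exact hω q (Ioo_subset_Icc_self hq)
  have hdense := Rat.denseRange_cast.open_subset_closure_inter (isOpen_Ioo (a := (0 : ℝ)) (b := T))
  rw [← closure_Ioo hT.ne] at hu
  exact closure_minimal hrat (hK.preimage hXω) (closure_minimal hdense isClosed_closure hu)

lemma mem_confinedAtRationals_Icc_of_sSup_lt {ω : Ω} {c t T : ℝ} (hXω : Continuous (X ω))
    (hX0 : ∀ u, 0 ≤ u → 0 ≤ X ω u) (hTt : T ≤ t) (h : sSup (X ω '' Icc 0 t) < c) :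
    ω ∈ confinedAtRationals X (Icc 0 c) T := by
  intro q hq
  have hbdd : BddAbove (X ω '' Icc 0 t) :=
    (isCompact_Icc.image_of_continuousOn hXω.continuousOn).bddAbove
  exact ⟨hX0 q hq.1, ((le_csSup hbdd (mem_image_of_mem _ ⟨hq.1, hq.2.trans hTt⟩)).trans_lt h).le⟩

end Confinement

lemma continuous_xiGenerator {f : ℝ → ℝ} (hf : ContDiff ℝ 2 f) : Continuous (xiGenerator f) := by
  have hf' : ContDiff ℝ 1 (deriv f) := (contDiff_succ_iff_deriv.1 hf).2.2
  unfold xiGenerator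
  have := hf'.continuous_deriv le_rfl
  have := hf.continuous_deriv (by norm_num)
  fun_prop

lemma pow_floor_div_le_exp_mul {ρ a T : ℝ} (hρ0 : 0 ≤ ρ) (hρ : ρ ≤ Real.exp (-a)) (ha : 0 ≤ a)
    (t : ℝ) : ρ ^ ⌊t / T⌋₊ ≤ Real.exp a * Real.exp (-(a * (t / T))) := by
  have hfloor : t / T - 1 ≤ ⌊t / T⌋₊ := by linarith [Nat.lt_floor_add_one (t / T)]
  calc ρ ^ ⌊t / T⌋₊ ≤ Real.exp (-a) ^ ⌊t / T⌋₊ := pow_le_pow_left₀ hρ0 hρ _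
    _ = Real.exp (-(a * ⌊t / T⌋₊)) := by rw [← Real.exp_nat_mul]; ring_nf
    _ ≤ Real.exp (a + -(a * (t / T))) := by
        gcongr
        nlinarith [mul_le_mul_of_nonneg_left hfloor ha]
    _ = Real.exp a * Real.exp (-(a * (t / T))) := Real.exp_add _ _

lemma exp_thirteen_fiftieths_le : Real.exp (13 / 50) ≤ 20736 / 15187 :=
  (Real.exp_bound_div_one_sub_of_interval (by norm_num) (by norm_num)).trans (by norm_num)

lemma pow_floor_div_thirteen_le (t : ℝ) :
    (15187 / 20736 : ℝ) ^ ⌊t / 13⌋₊ ≤ 2 * Real.exp (-(t / 50)) := by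
  have hρ : (15187 / 20736 : ℝ) ≤ Real.exp (-(13 / 50)) := by
    rw [Real.exp_neg, le_inv_comm₀ (by norm_num) (Real.exp_pos _)]
    exact exp_thirteen_fiftieths_le.trans (by norm_num)
  calc (15187 / 20736 : ℝ) ^ ⌊t / 13⌋₊ ≤ Real.exp (13 / 50) * Real.exp (-(13 / 50 * (t / 13))) :=
        pow_floor_div_le_exp_mul (by norm_num) hρ (by norm_num) t
    _ ≤ 2 * Real.exp (-(t / 50)) := by
        rw [show 13 / 50 * (t / 13) = t / 50 by ring]
        gcongr
        exact exp_thirteen_fiftieths_le.trans (by norm_num)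

section Xi

variable {Ω : Type*} {m : MeasurableSpace Ω} {μ : Measure Ω} [IsFiniteMeasure μ]
  {ℱ : Filtration ℝ≥0 m} {Ξ : Ω → ℝ → ℝ}

theorem measureReal_confinedAtRationals_succ_le
    (hM : Martingale (fun (t : ℝ≥0) ω =>
      xiTest (Ξ ω t) - ∫ u in (0 : ℝ)..t, xiGenerator xiTest (Ξ ω u)) ℱ μ)
    (hadapt : Adapted ℱ fun (t : ℝ≥0) ω => Ξ ω t)
    (hpath : ∀ᵐ ω ∂μ, Continuous (Ξ ω) ∧ ∀ t, 0 ≤ t → 0 ≤ Ξ ω t) (n : ℕ) :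
    μ.real (confinedAtRationals Ξ (Icc 0 1) (13 * (n + 1))) ≤
      15187 / 20736 * μ.real (confinedAtRationals Ξ (Icc 0 1) (13 * n)) := by
  obtain ⟨C, hC⟩ :=
    contDiff_xiTest.continuous.bounded_above_of_compact_support hasCompactSupport_xiTest
  have hf : ∀ t : ℝ≥0, Integrable (fun ω => xiTest (Ξ ω t)) μ := fun t =>
    .of_bound (contDiff_xiTest.continuous.measurable.comp
      ((hadapt t).mono (ℱ.le t) le_rfl)).aestronglyMeasurable C (ae_of_all _ fun ω => hC _)
  have hs : ((13 * n : ℝ≥0) : ℝ) = 13 * n := by push_cast; rfl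
  have ht : ((13 * (n + 1) : ℝ≥0) : ℝ) = 13 * (n + 1) := by push_cast; rfl
  have hbound := measureReal_confined_le hM hf (continuous_xiGenerator contDiff_xiTest)
    (S := Ici 0) (K := Icc 0 1) (C := 5203 / 768) (A := 1) (B := 1)
    (fun z hz => xiTest_nonneg hz) (fun z hz => xiTest_le hz) (fun z hz => one_le_xiTest hz)
    (fun z hz => xiGenerator_xiTest_le_one hz) (fun z hz => xiGenerator_xiTest_le_neg_one hz)
    (s := 13 * n) (t := 13 * (n + 1)) (by gcongr; simp)
    (hpath.mono fun ω hω => ⟨hω.1, fun u hu => hω.2 u (le_trans (by positivity) hu.1)⟩)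
    (measurableSet_confinedAtRationals hadapt measurableSet_Icc hs.ge)
    (ℱ.le _ _ (measurableSet_confinedAtRationals hadapt measurableSet_Icc ht.ge))
    (confinedAtRationals_anti (by linarith))
    (hpath.mono fun ω hω hmem u hu => mem_of_mem_confinedAtRationals hmem hω.1 isClosed_Icc
      (by positivity) ⟨le_trans (by positivity) hu.1, ht ▸ hu.2⟩)
  rw [hs, ht] at hbound
  linarith

end Xi

end ModDev

open ModDev

/-- Lemma 5.1, (5.2): for `t > 100`, `ℙ(sup_{0 ≤ s ≤ t} Ξ(s) < 1) ≤ 2 e^{-t/50}`. -/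
theorem xi_smallness_bound
    {Ω : Type*} [MeasurableSpace Ω] (μ : Measure Ω) [IsProbabilityMeasure μ]
    (Ξ : Ω → ℝ → ℝ)
    (hΞ : ModDev.SolvesMP μ (fun z => 1 - Real.exp (-z)) (fun z => Real.exp (-z) / 2) Ξ)
    (hΞ0 : ∀ᵐ ω ∂μ, Ξ ω 0 = 0 ∧ ∀ t, 0 ≤ t → 0 ≤ Ξ ω t) :
    ∀ t : ℝ, 100 < t →
      (μ {ω | sSup (Ξ ω '' Set.Icc 0 t) < 1}).toReal ≤ 2 * Real.exp (-(t / 50)) := by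
  obtain ⟨-, hcont, ℱ, hadapt, hmart⟩ := hΞ
  have hM := hmart xiTest contDiff_xiTest hasCompactSupport_xiTest (subset_univ _)
  have hpath : ∀ᵐ ω ∂μ, Continuous (Ξ ω) ∧ ∀ t, 0 ≤ t → 0 ≤ Ξ ω t :=
    hcont.and (hΞ0.mono fun ω h => h.2)
  intro t ht
  set n := ⌊t / 13⌋₊
  set P : ℕ → ℝ := fun k => μ.real (confinedAtRationals Ξ (Icc 0 1) (13 * k))
  have hsub : {ω | sSup (Ξ ω '' Icc 0 t) < 1} ≤ᵐ[μ] confinedAtRationals Ξ (Icc 0 1) (13 * n) := by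
    filter_upwards [hpath] with ω hω hlt
    exact mem_confinedAtRationals_Icc_of_sSup_lt hω.1 hω.2
      (by linarith [Nat.floor_le (show 0 ≤ t / 13 by positivity)]) hlt
  calc (μ {ω | sSup (Ξ ω '' Icc 0 t) < 1}).toReal ≤ P n :=
        ENNReal.toReal_mono (measure_ne_top _ _) (measure_mono_ae hsub)
    _ ≤ (15187 / 20736) ^ n * P 0 := le_geom (by norm_num) n fun k _ => by
        simpa [P] using measureReal_confinedAtRationals_succ_le hM hadapt hpath k
    _ ≤ (15187 / 20736) ^ n := mul_le_of_le_one_right (by positivity) measureReal_le_one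
    _ ≤ 2 * Real.exp (-(t / 50)) := pow_floor_div_thirteen_le t
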